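/- Let e_p, e_M, W be discrete random variables, h and g deterministic functions, and M(p) := h(e_p) + g(e_M). Then I(M(p); W) ≤ I(h(e_p); W) + I(g(e_M); W) when W → (e_p, e_M) → M(p) forms a Markov chain and e_p, e_M are independent given W. -/
import Mathlib


open Real

/-- A probability distribution on a finite sample space, given by weights. -/
structure FinProb (Ω : Type) [Fintype Ω] where
  w : Ω → ℝ
  nonneg : ∀ ω, 0 ≤ w ω
  sum_one : ∑ ω, w ω = 1

variable {Ω : Type} [Fintype Ω]

/-- Probability mass function of a random variable. -/
noncomputable def pm {S : Type} [DecidableEq S]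
    (μ : FinProb Ω) (X : Ω → S) (x : S) : ℝ :=
  ∑ ω, if X ω = x then μ.w ω else 0

/-- Shannon entropy of a discrete random variable. -/
noncomputable def entropy {S : Type} [Fintype S] [DecidableEq S]
    (μ : FinProb Ω) (X : Ω → S) : ℝ :=
  -∑ x, pm μ X x * Real.log (pm μ X x)

/-- Conditional entropy H(X|Y) = H(X,Y) - H(Y). -/
noncomputable def condEntropy {S T : Type} [Fintype S] [DecidableEq S]
    [Fintype T] [DecidableEq T]
    (μ : FinProb Ω) (X : Ω → S) (Y : Ω → T) : ℝ :=
  entropy μ (fun ω => (X ω, Y ω)) - entropy μ Y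

/-- Mutual information I(X;Y) = H(X) - H(X|Y). -/
noncomputable def mutualInfo {S T : Type} [Fintype S] [DecidableEq S]
    [Fintype T] [DecidableEq T]
    (μ : FinProb Ω) (X : Ω → S) (Y : Ω → T) : ℝ :=
  entropy μ X - condEntropy μ X Y

section helpers
variable {S T C : Type} (μ : FinProb Ω)

lemma pm_nonneg [DecidableEq S] (X : Ω → S) (x : S) : 0 ≤ pm μ X x :=
  Finset.sum_nonneg fun ω _ => by
    by_cases h : X ω = x <;> simp [pm, h, μ.nonneg ω]

lemma pm_sum [Fintype S] [DecidableEq S] (X : Ω → S) : ∑ x, pm μ X x = 1 := by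
  unfold pm
  rw [Finset.sum_comm]
  simp [μ.sum_one]

lemma pm_comp [DecidableEq S] [Fintype T] [DecidableEq T]
    (F : T → S) (Z : Ω → T) (s : S) :
    pm μ (fun ω => F (Z ω)) s = ∑ z, if F z = s then pm μ Z z else 0 := by
  unfold pm
  have : ∀ z : T, (if F z = s then ∑ ω, if Z ω = z then μ.w ω else 0 else 0)
      = ∑ ω, if Z ω = z then (if F z = s then μ.w ω else 0) else 0 := by
    intro z; by_cases h : F z = s <;> simp [h]
  rw [Finset.sum_congr rfl fun z _ => this z, Finset.sum_comm]
  refine Finset.sum_congr rfl fun ω _ => ?_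
  rw [Finset.sum_ite_eq]
  simp

lemma pm_fst [Fintype S] [DecidableEq S] [Fintype T] [DecidableEq T]
    (X : Ω → S) (Y : Ω → T) (x : S) :
    pm μ X x = ∑ y, pm μ (fun ω => (X ω, Y ω)) (x, y) := by
  have h := pm_comp μ Prod.fst (fun ω => (X ω, Y ω)) x
  have e : pm μ (fun ω => ((X ω, Y ω)).1) x = pm μ X x := rfl
  rw [e] at h
  rw [h, Fintype.sum_prod_type]
  have eq1 : ∀ x1 : S, (∑ x2 : T, if x1 = x then pm μ (fun ω => (X ω, Y ω)) (x1, x2) else 0)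
      = if x1 = x then ∑ x2 : T, pm μ (fun ω => (X ω, Y ω)) (x1, x2) else 0 := by
    intro x1; by_cases hh : x1 = x <;> simp [hh]
  rw [Finset.sum_congr rfl fun x1 _ => eq1 x1, Finset.sum_ite_eq']
  simp

lemma pm_snd [Fintype S] [DecidableEq S] [Fintype T] [DecidableEq T]
    (X : Ω → S) (Y : Ω → T) (y : T) :
    pm μ Y y = ∑ x, pm μ (fun ω => (X ω, Y ω)) (x, y) := by
  have h := pm_comp μ Prod.snd (fun ω => (X ω, Y ω)) y
  have e : pm μ (fun ω => ((X ω, Y ω)).2) y = pm μ Y y := rfl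
  rw [e] at h
  rw [h, Fintype.sum_prod_type_right]
  have eq1 : ∀ y1 : T, (∑ x1 : S, if y1 = y then pm μ (fun ω => (X ω, Y ω)) (x1, y1) else 0)
      = if y1 = y then ∑ x1 : S, pm μ (fun ω => (X ω, Y ω)) (x1, y1) else 0 := by
    intro y1; by_cases hh : y1 = y <;> simp [hh]
  rw [Finset.sum_congr rfl fun y1 _ => eq1 y1, Finset.sum_ite_eq']
  simp

lemma pm_pair_le_fst [Fintype S] [DecidableEq S] [Fintype T] [DecidableEq T]
    (X : Ω → S) (Y : Ω → T) (x : S) (y : T) :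
    pm μ (fun ω => (X ω, Y ω)) (x, y) ≤ pm μ X x := by
  rw [pm_fst μ X Y x]
  exact Finset.single_le_sum (fun i _ => pm_nonneg μ _ _) (Finset.mem_univ y)

lemma pm_pair_le_snd [Fintype S] [DecidableEq S] [Fintype T] [DecidableEq T]
    (X : Ω → S) (Y : Ω → T) (x : S) (y : T) :
    pm μ (fun ω => (X ω, Y ω)) (x, y) ≤ pm μ Y y := by
  rw [pm_snd μ X Y y]
  exact Finset.single_le_sum (fun i _ => pm_nonneg μ (fun ω => (X ω, Y ω)) (i, y)) (Finset.mem_univ x)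

lemma gibbs {ι : Type} [Fintype ι] (p q : ι → ℝ) (hp : ∀ i, 0 ≤ p i) (hq : ∀ i, 0 ≤ q i)
    (h0 : ∀ i, q i = 0 → p i = 0) :
    ∑ i, p i * Real.log (q i) - ∑ i, p i * Real.log (p i) ≤ ∑ i, q i - ∑ i, p i := by
  rw [← Finset.sum_sub_distrib, ← Finset.sum_sub_distrib]
  refine Finset.sum_le_sum fun i _ => ?_
  rcases eq_or_lt_of_le (hp i) with h|h
  · rw [← h]; simpa using hq i
  · have hqi : 0 < q i := (hq i).lt_of_ne fun e => by have := h0 i e.symm; linarith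
    have hl := Real.log_le_sub_one_of_pos (div_pos hqi h)
    rw [Real.log_div (ne_of_gt hqi) (ne_of_gt h)] at hl
    calc p i * Real.log (q i) - p i * Real.log (p i)
        = p i * (Real.log (q i) - Real.log (p i)) := by ring
      _ ≤ p i * (q i / p i - 1) := by nlinarith
      _ = q i - p i := by field_simp

lemma entropy_pair_le [Fintype S] [DecidableEq S] [Fintype T] [DecidableEq T]
    (X : Ω → S) (Y : Ω → T) :
    entropy μ (fun ω => (X ω, Y ω)) ≤ entropy μ X + entropy μ Y := by
  set P := pm μ (fun ω => (X ω, Y ω)) with hP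
  have key := gibbs (ι := S × T) P (fun z => pm μ X z.1 * pm μ Y z.2)
    (fun i => pm_nonneg μ _ _)
    (fun i => mul_nonneg (pm_nonneg μ _ _) (pm_nonneg μ _ _))
    (fun i hi => by
      rcases mul_eq_zero.1 hi with h|h
      · refine le_antisymm ?_ (pm_nonneg μ _ _)
        rw [← h]; exact pm_pair_le_fst μ X Y i.1 i.2
      · refine le_antisymm ?_ (pm_nonneg μ _ _)
        rw [← h]; exact pm_pair_le_snd μ X Y i.1 i.2)
  have hsq : ∑ i : S × T, pm μ X i.1 * pm μ Y i.2 = 1 := by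
    rw [Fintype.sum_prod_type]
    simp [← Finset.mul_sum, ← Finset.sum_mul, pm_sum]
  have hsp : ∑ i : S × T, P i = 1 := pm_sum μ _
  have hlog : ∑ i : S × T, P i * Real.log (pm μ X i.1 * pm μ Y i.2)
      = ∑ x, pm μ X x * Real.log (pm μ X x) + ∑ y, pm μ Y y * Real.log (pm μ Y y) := by
    have step : ∀ i : S × T, P i * Real.log (pm μ X i.1 * pm μ Y i.2)
        = P i * Real.log (pm μ X i.1) + P i * Real.log (pm μ Y i.2) := by
      intro i
      rcases eq_or_lt_of_le (pm_nonneg μ (fun ω => (X ω, Y ω)) i) with h|h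
      · have hz : P i = 0 := h.symm
        rw [hz]; ring
      · have hx : 0 < pm μ X i.1 := lt_of_lt_of_le h (pm_pair_le_fst μ X Y i.1 i.2)
        have hy : 0 < pm μ Y i.2 := lt_of_lt_of_le h (pm_pair_le_snd μ X Y i.1 i.2)
        rw [Real.log_mul (ne_of_gt hx) (ne_of_gt hy)]; ring
    rw [Finset.sum_congr rfl fun i _ => step i, Finset.sum_add_distrib]
    congr 1
    · rw [Fintype.sum_prod_type]
      refine Finset.sum_congr rfl fun x _ => ?_
      have e2 : ∀ y, P (x, y) * Real.log (pm μ X (x, y).1)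
          = P (x, y) * Real.log (pm μ X x) := fun y => rfl
      rw [Finset.sum_congr rfl fun y _ => e2 y, ← Finset.sum_mul, ← pm_fst]
    · rw [Fintype.sum_prod_type_right]
      refine Finset.sum_congr rfl fun y _ => ?_
      have e2 : ∀ x, P (x, y) * Real.log (pm μ Y (x, y).2)
          = P (x, y) * Real.log (pm μ Y y) := fun x => rfl
      rw [Finset.sum_congr rfl fun x _ => e2 x, ← Finset.sum_mul, ← pm_snd]
  rw [hsq, hsp, hlog] at key
  unfold entropy
  rw [← hP]
  linarith



/-- Core of the data-processing inequality, in terms of abstract pmfs. -/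
lemma dp_core {S T C : Type} [Fintype S] [DecidableEq S] [Fintype T] [Fintype C]
    (f : T → S) (P : T × C → ℝ) (pZ : T → ℝ) (pMW : S × C → ℝ) (pM : S → ℝ)
    (hPnn : ∀ p, 0 ≤ P p)
    (hmZ : ∀ z, ∑ w, P (z, w) = pZ z)
    (hb : ∀ m w, pMW (m, w) = ∑ z, if f z = m then P (z, w) else 0)
    (ha : ∀ m, pM m = ∑ z, if f z = m then pZ z else 0)
    (hsum : ∑ z, pZ z = 1) :
    ∑ z, pZ z * Real.log (pZ z) + ∑ p : S × C, pMW p * Real.log (pMW p)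
      ≤ ∑ m, pM m * Real.log (pM m) + ∑ p : T × C, P p * Real.log (P p) := by
  have hZnn : ∀ z, 0 ≤ pZ z := fun z => by
    rw [← hmZ z]; exact Finset.sum_nonneg fun w _ => hPnn _
  have hMWnn : ∀ p : S × C, 0 ≤ pMW p := fun p => by
    rw [show p = (p.1, p.2) from rfl, hb p.1 p.2]
    exact Finset.sum_nonneg fun z _ => by by_cases hh : f z = p.1 <;> simp [hh, hPnn]
  have he : ∀ z w, P (z, w) ≤ pZ z := fun z w => by
    rw [← hmZ z]
    exact Finset.single_le_sum (fun w' _ => hPnn (z, w')) (Finset.mem_univ w)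
  have hc : ∀ z, pZ z ≤ pM (f z) := fun z => by
    rw [ha (f z)]
    have := Finset.single_le_sum (f := fun z' => if f z' = f z then pZ z' else 0)
      (fun i _ => by by_cases hh : f i = f z <;> simp [hh, hZnn]) (Finset.mem_univ z)
    simpa using this
  have hd : ∀ z w, P (z, w) ≤ pMW (f z, w) := fun z w => by
    rw [hb (f z) w]
    have := Finset.single_le_sum (f := fun z' => if f z' = f z then P (z', w) else 0)
      (fun i _ => by by_cases hh : f i = f z <;> simp [hh, hPnn]) (Finset.mem_univ z)
    simpa using this
  have hMnn : ∀ m, 0 ≤ pM m := fun m => by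
    rw [ha m]; exact Finset.sum_nonneg fun z _ => by by_cases hh : f z = m <;> simp [hh, hZnn]
  have hf : ∀ m, ∑ w, pMW (m, w) = pM m := fun m => by
    rw [ha m]
    have e1 : ∀ w, pMW (m, w) = ∑ z, if f z = m then P (z, w) else 0 := fun w => hb m w
    rw [Finset.sum_congr rfl fun w _ => e1 w, Finset.sum_comm]
    refine Finset.sum_congr rfl fun z _ => ?_
    by_cases hh : f z = m <;> simp [hh, hmZ z]
  have hsP : ∑ p : T × C, P p = 1 := by
    rw [Fintype.sum_prod_type]
    rw [Finset.sum_congr rfl fun z _ => hmZ z, hsum]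
  -- the comparison distribution
  set q : T × C → ℝ := fun p => if pM (f p.1) = 0 then 0
      else pZ p.1 * pMW (f p.1, p.2) / pM (f p.1) with hq_def
  have hqnn : ∀ p, 0 ≤ q p := fun p => by
    rw [hq_def]; dsimp only
    split
    · exact le_refl 0
    · exact div_nonneg (mul_nonneg (hZnn _) (hMWnn _)) (hMnn _)
  have h0 : ∀ p, q p = 0 → P p = 0 := by
    rintro ⟨z, w⟩ hq0
    rw [hq_def] at hq0; dsimp only at hq0
    by_cases hM : pM (f z) = 0
    · have h1 : pZ z = 0 := le_antisymm (hM ▸ hc z) (hZnn z)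
      exact le_antisymm (h1 ▸ he z w) (hPnn _)
    · rw [if_neg hM] at hq0
      rcases div_eq_zero_iff.1 hq0 with h1 | h1
      · rcases mul_eq_zero.1 h1 with h2 | h2
        · exact le_antisymm (h2 ▸ he z w) (hPnn _)
        · exact le_antisymm (h2 ▸ hd z w) (hPnn _)
      · exact absurd h1 hM
  have hsq : ∑ p : T × C, q p ≤ 1 := by
    rw [Fintype.sum_prod_type]
    calc ∑ z, ∑ w, q (z, w) ≤ ∑ z, pZ z := by
          refine Finset.sum_le_sum fun z _ => ?_
          by_cases hM : pM (f z) = 0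
          · simp only [hq_def, hM, if_pos rfl]
            simpa using hZnn z
          · simp only [hq_def, if_neg hM]
            rw [← Finset.sum_div, ← Finset.mul_sum, hf (f z), mul_div_assoc,
              div_self hM, mul_one]
      _ = 1 := hsum
  have key := gibbs P q hPnn hqnn h0
  -- expand the log of q termwise
  have step : ∀ (z : T) (w : C), P (z, w) * Real.log (q (z, w))
      = P (z, w) * Real.log (pZ z) + P (z, w) * Real.log (pMW (f z, w))
        - P (z, w) * Real.log (pM (f z)) := by
    intro z w
    rcases eq_or_lt_of_le (hPnn (z, w)) with h|h
    · rw [← h]; ring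
    · have h1 : 0 < pZ z := lt_of_lt_of_le h (he z w)
      have h2 : 0 < pMW (f z, w) := lt_of_lt_of_le h (hd z w)
      have h3 : 0 < pM (f z) := lt_of_lt_of_le h1 (hc z)
      rw [hq_def]; dsimp only
      rw [if_neg (ne_of_gt h3), Real.log_div (by positivity) (ne_of_gt h3),
        Real.log_mul (ne_of_gt h1) (ne_of_gt h2)]
      ring
  have hlog : ∑ p : T × C, P p * Real.log (q p)
      = ∑ z, pZ z * Real.log (pZ z) + ∑ p : S × C, pMW p * Real.log (pMW p)
        - ∑ m, pM m * Real.log (pM m) := by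
    rw [Fintype.sum_prod_type]
    rw [Finset.sum_congr rfl fun z _ => Finset.sum_congr rfl fun w _ => step z w]
    simp only [Finset.sum_add_distrib, Finset.sum_sub_distrib]
    congr 1
    · congr 1
      · refine Finset.sum_congr rfl fun z _ => ?_
        rw [← Finset.sum_mul, hmZ z]
      · -- middle term
        have hB : ∑ p : S × C, pMW p * Real.log (pMW p)
            = ∑ z, ∑ w, P (z, w) * Real.log (pMW (f z, w)) := by
          rw [Fintype.sum_prod_type_right]
          have e1 : ∀ (w : C) (m : S), pMW (m, w) * Real.log (pMW (m, w))
              = ∑ z, if f z = m then P (z, w) * Real.log (pMW (m, w)) else 0 := by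
            intro w m
            rw [hb m w, Finset.sum_mul]
            refine Finset.sum_congr rfl fun z _ => ?_
            by_cases hh : f z = m <;> simp [hh]
          calc ∑ w, ∑ m, pMW (m, w) * Real.log (pMW (m, w))
              = ∑ w, ∑ m, ∑ z, if f z = m then P (z, w) * Real.log (pMW (m, w)) else 0 :=
                Finset.sum_congr rfl fun w _ => Finset.sum_congr rfl fun m _ => e1 w m
            _ = ∑ w, ∑ z, ∑ m, if f z = m then P (z, w) * Real.log (pMW (m, w)) else 0 :=
                Finset.sum_congr rfl fun w _ => Finset.sum_comm
            _ = ∑ w, ∑ z, P (z, w) * Real.log (pMW (f z, w)) :=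
                Finset.sum_congr rfl fun w _ => Finset.sum_congr rfl fun z _ => by
                  rw [Finset.sum_ite_eq]; simp
            _ = ∑ z, ∑ w, P (z, w) * Real.log (pMW (f z, w)) := Finset.sum_comm
        rw [hB]
    · -- last term
      have e2 : ∀ z, ∑ w, P (z, w) * Real.log (pM (f z)) = pZ z * Real.log (pM (f z)) := by
        intro z; rw [← Finset.sum_mul, hmZ z]
      rw [Finset.sum_congr rfl fun z _ => e2 z]
      have e3 : ∀ m, pM m * Real.log (pM m)
          = ∑ z, if f z = m then pZ z * Real.log (pM m) else 0 := by
        intro m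
        rw [ha m, Finset.sum_mul]
        refine Finset.sum_congr rfl fun z _ => ?_
        by_cases hh : f z = m <;> simp [hh]
      have e3' : ∑ m, pM m * Real.log (pM m)
          = ∑ m, ∑ z, if f z = m then pZ z * Real.log (pM m) else 0 :=
        Finset.sum_congr rfl fun m _ => e3 m
      rw [e3']
      calc ∑ z, pZ z * Real.log (pM (f z))
          = ∑ z, ∑ m, if f z = m then pZ z * Real.log (pM m) else 0 := by
            refine Finset.sum_congr rfl fun z _ => ?_
            rw [Finset.sum_ite_eq]; simp
        _ = ∑ m, ∑ z, if f z = m then pZ z * Real.log (pM m) else 0 := Finset.sum_comm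
  rw [hlog, hsP] at key
  linarith

/-- Core of H(X,Y,W) = H(X,W) + H(Y,W) - H(W) under conditional independence. -/
lemma ci_core {S T C : Type} [Fintype S] [Fintype T] [Fintype C]
    (P3 : (S × T) × C → ℝ) (pXW : S × C → ℝ) (pYW : T × C → ℝ) (pW : C → ℝ)
    (hnn : ∀ p, 0 ≤ P3 p)
    (hmx : ∀ x c, pXW (x, c) = ∑ y, P3 ((x, y), c))
    (hmy : ∀ y c, pYW (y, c) = ∑ x, P3 ((x, y), c))
    (hmw : ∀ c, pW c = ∑ p : S × T, P3 (p, c))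
    (hci : ∀ x y c, P3 ((x, y), c) * pW c = pXW (x, c) * pYW (y, c)) :
    ∑ p : (S × T) × C, P3 p * Real.log (P3 p)
      = ∑ p : S × C, pXW p * Real.log (pXW p) + ∑ p : T × C, pYW p * Real.log (pYW p)
        - ∑ c, pW c * Real.log (pW c) := by
  have step : ∀ (x : S) (y : T) (c : C), P3 ((x, y), c) * Real.log (P3 ((x, y), c))
      = P3 ((x, y), c) * Real.log (pXW (x, c)) + P3 ((x, y), c) * Real.log (pYW (y, c))
        - P3 ((x, y), c) * Real.log (pW c) := by
    intro x y c
    rcases eq_or_lt_of_le (hnn ((x, y), c)) with h|h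
    · rw [← h]; ring
    · have hx : 0 < pXW (x, c) := by
        rw [hmx]
        exact lt_of_lt_of_le h (Finset.single_le_sum
          (fun y' _ => hnn ((x, y'), c)) (Finset.mem_univ y))
      have hy : 0 < pYW (y, c) := by
        rw [hmy]
        exact lt_of_lt_of_le h (Finset.single_le_sum
          (fun x' _ => hnn ((x', y), c)) (Finset.mem_univ x))
      have hw : 0 < pW c := by
        rw [hmw]
        exact lt_of_lt_of_le h (Finset.single_le_sum
          (fun p _ => hnn (p, c)) (Finset.mem_univ (x, y)))
      have e : P3 ((x, y), c) = pXW (x, c) * pYW (y, c) / pW c :=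
        (eq_div_iff (ne_of_gt hw)).2 (hci x y c)
      rw [e, Real.log_div (by positivity) (ne_of_gt hw),
        Real.log_mul (ne_of_gt hx) (ne_of_gt hy)]
      ring
  have main : ∀ p : (S × T) × C, P3 p * Real.log (P3 p)
      = P3 p * Real.log (pXW (p.1.1, p.2)) + P3 p * Real.log (pYW (p.1.2, p.2))
        - P3 p * Real.log (pW p.2) := by
    rintro ⟨⟨x, y⟩, c⟩; exact step x y c
  rw [Finset.sum_congr rfl fun p _ => main p]
  simp only [Finset.sum_add_distrib, Finset.sum_sub_distrib]
  congr 1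
  · congr 1
    · -- I1
      calc ∑ p : (S × T) × C, P3 p * Real.log (pXW (p.1.1, p.2))
          = ∑ z : S × T, ∑ c, P3 (z, c) * Real.log (pXW (z.1, c)) := by
            rw [Fintype.sum_prod_type]
        _ = ∑ x, ∑ y, ∑ c, P3 ((x, y), c) * Real.log (pXW (x, c)) := by
            rw [Fintype.sum_prod_type]
        _ = ∑ x, ∑ c, ∑ y, P3 ((x, y), c) * Real.log (pXW (x, c)) :=
            Finset.sum_congr rfl fun x _ => Finset.sum_comm
        _ = ∑ x, ∑ c, pXW (x, c) * Real.log (pXW (x, c)) := by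
            refine Finset.sum_congr rfl fun x _ => Finset.sum_congr rfl fun c _ => ?_
            rw [← Finset.sum_mul, ← hmx]
        _ = ∑ p : S × C, pXW p * Real.log (pXW p) := by
            rw [Fintype.sum_prod_type]
    · -- I2
      calc ∑ p : (S × T) × C, P3 p * Real.log (pYW (p.1.2, p.2))
          = ∑ z : S × T, ∑ c, P3 (z, c) * Real.log (pYW (z.2, c)) := by
            rw [Fintype.sum_prod_type]
        _ = ∑ x, ∑ y, ∑ c, P3 ((x, y), c) * Real.log (pYW (y, c)) := by
            rw [Fintype.sum_prod_type]
        _ = ∑ y, ∑ x, ∑ c, P3 ((x, y), c) * Real.log (pYW (y, c)) := Finset.sum_comm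
        _ = ∑ y, ∑ c, ∑ x, P3 ((x, y), c) * Real.log (pYW (y, c)) :=
            Finset.sum_congr rfl fun y _ => Finset.sum_comm
        _ = ∑ y, ∑ c, pYW (y, c) * Real.log (pYW (y, c)) := by
            refine Finset.sum_congr rfl fun y _ => Finset.sum_congr rfl fun c _ => ?_
            rw [← Finset.sum_mul, ← hmy]
        _ = ∑ p : T × C, pYW p * Real.log (pYW p) := by
            rw [Fintype.sum_prod_type]
  · -- I3
    calc ∑ p : (S × T) × C, P3 p * Real.log (pW p.2)
        = ∑ z : S × T, ∑ c, P3 (z, c) * Real.log (pW c) := by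
          rw [Fintype.sum_prod_type]
      _ = ∑ c, ∑ z : S × T, P3 (z, c) * Real.log (pW c) := Finset.sum_comm
      _ = ∑ c, pW c * Real.log (pW c) := by
          refine Finset.sum_congr rfl fun c _ => ?_
          rw [← Finset.sum_mul, ← hmw]

section plumb
variable {A B S T C : Type} (μ : FinProb Ω)

lemma pm_comp_fst [Fintype A] [DecidableEq A] [DecidableEq S] [DecidableEq C]
    (φ : A → S) (U : Ω → A) (W : Ω → C) (x : S) (c : C) :
    pm μ (fun ω => (φ (U ω), W ω)) (x, c)
      = ∑ a, if φ a = x then pm μ (fun ω => (U ω, W ω)) (a, c) else 0 := by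
  unfold pm
  have e : ∀ a : A, (if φ a = x then ∑ ω, if (U ω, W ω) = (a, c) then μ.w ω else 0 else 0)
      = ∑ ω, if U ω = a then (if φ (U ω) = x ∧ W ω = c then μ.w ω else 0) else 0 := by
    intro a
    by_cases h1 : φ a = x
    · rw [if_pos h1]
      refine Finset.sum_congr rfl fun ω _ => ?_
      by_cases h2 : U ω = a
      · subst h2; simp [Prod.ext_iff, h1]
      · simp [Prod.ext_iff, h2]
    · rw [if_neg h1]
      symm
      refine Finset.sum_eq_zero fun ω _ => ?_
      by_cases h2 : U ω = a
      · subst h2; simp [h1]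
      · simp [h2]
  rw [Finset.sum_congr rfl fun a _ => e a, Finset.sum_comm]
  refine Finset.sum_congr rfl fun ω _ => ?_
  rw [Finset.sum_ite_eq]
  simp [Prod.ext_iff]

lemma pm_marg_mid [DecidableEq S] [Fintype T] [DecidableEq T] [DecidableEq C]
    (X : Ω → S) (Y : Ω → T) (W : Ω → C) (x : S) (c : C) :
    pm μ (fun ω => (X ω, W ω)) (x, c)
      = ∑ y, pm μ (fun ω => ((X ω, Y ω), W ω)) ((x, y), c) := by
  unfold pm
  rw [Finset.sum_comm]
  refine Finset.sum_congr rfl fun ω _ => ?_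
  have e : ∀ y : T, (if ((X ω, Y ω), W ω) = ((x, y), c) then μ.w ω else 0)
      = if Y ω = y then (if X ω = x ∧ W ω = c then μ.w ω else 0) else 0 := by
    intro y
    by_cases h2 : Y ω = y <;> simp [Prod.ext_iff, h2]
  rw [Finset.sum_congr rfl fun y _ => e y, Finset.sum_ite_eq]
  simp [Prod.ext_iff]

lemma pm_marg_mid' [Fintype S] [DecidableEq S] [DecidableEq T] [DecidableEq C]
    (X : Ω → S) (Y : Ω → T) (W : Ω → C) (y : T) (c : C) :
    pm μ (fun ω => (Y ω, W ω)) (y, c)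
      = ∑ x, pm μ (fun ω => ((X ω, Y ω), W ω)) ((x, y), c) := by
  unfold pm
  rw [Finset.sum_comm]
  refine Finset.sum_congr rfl fun ω _ => ?_
  have e : ∀ x : S, (if ((X ω, Y ω), W ω) = ((x, y), c) then μ.w ω else 0)
      = if X ω = x then (if Y ω = y ∧ W ω = c then μ.w ω else 0) else 0 := by
    intro x
    by_cases h2 : X ω = x <;> simp [Prod.ext_iff, h2]
  rw [Finset.sum_congr rfl fun x _ => e x, Finset.sum_ite_eq]
  simp [Prod.ext_iff]

lemma pm_pairmap [Fintype A] [DecidableEq A] [Fintype B] [DecidableEq B]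
    [DecidableEq S] [DecidableEq T] [DecidableEq C]
    (φ : A → S) (ψ : B → T) (U : Ω → A) (V : Ω → B) (Wr : Ω → C) (x : S) (y : T) (c : C) :
    pm μ (fun ω => ((φ (U ω), ψ (V ω)), Wr ω)) ((x, y), c)
      = ∑ p : A × B, if φ p.1 = x ∧ ψ p.2 = y
          then pm μ (fun ω => (U ω, V ω, Wr ω)) (p.1, p.2, c) else 0 := by
  unfold pm
  have e : ∀ p : A × B, (if φ p.1 = x ∧ ψ p.2 = y
        then ∑ ω, if (U ω, V ω, Wr ω) = (p.1, p.2, c) then μ.w ω else 0 else 0)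
      = ∑ ω, if (U ω, V ω) = p
          then (if φ (U ω) = x ∧ ψ (V ω) = y ∧ Wr ω = c then μ.w ω else 0) else 0 := by
    rintro ⟨a, b⟩
    by_cases h1 : φ a = x ∧ ψ b = y
    · rw [if_pos h1]
      refine Finset.sum_congr rfl fun ω _ => ?_
      by_cases h2 : U ω = a <;> by_cases h3 : V ω = b
      · subst h2; subst h3; simp [Prod.ext_iff, h1.1, h1.2]
      all_goals simp [Prod.ext_iff, h2, h3]
    · rw [if_neg h1]
      symm
      refine Finset.sum_eq_zero fun ω _ => ?_
      by_cases h2 : U ω = a <;> by_cases h3 : V ω = b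
      · subst h2; subst h3
        have : ¬(φ (U ω) = x ∧ ψ (V ω) = y ∧ Wr ω = c) := fun ⟨u, v, _⟩ => h1 ⟨u, v⟩
        simp [this]
      all_goals simp [Prod.ext_iff, h2, h3]
  rw [Finset.sum_congr rfl fun p _ => e p, Finset.sum_comm]
  refine Finset.sum_congr rfl fun ω _ => ?_
  rw [Finset.sum_ite_eq]
  simp [Prod.ext_iff, and_assoc]



section entropylevel
variable {A B S T C : Type} (μ : FinProb Ω)

lemma dp_entropy [Fintype S] [DecidableEq S] [Fintype T] [DecidableEq T]
    [Fintype C] [DecidableEq C] (Z : Ω → T) (W : Ω → C) (f : T → S) :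
    entropy μ (fun ω => f (Z ω)) + entropy μ (fun ω => (Z ω, W ω))
      ≤ entropy μ Z + entropy μ (fun ω => (f (Z ω), W ω)) := by
  have core := dp_core f (pm μ (fun ω => (Z ω, W ω))) (pm μ Z)
      (pm μ (fun ω => (f (Z ω), W ω))) (pm μ (fun ω => f (Z ω)))
      (fun p => pm_nonneg μ _ _)
      (fun z => (pm_fst μ Z W z).symm)
      (fun m w => pm_comp_fst μ f Z W m w)
      (fun m => pm_comp μ f Z m)
      (pm_sum μ Z)
  unfold entropy
  linarith [core]

lemma ci_entropy [Fintype S] [DecidableEq S] [Fintype T] [DecidableEq T]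
    [Fintype C] [DecidableEq C] (X : Ω → S) (Y : Ω → T) (W : Ω → C)
    (hci : ∀ x y c, pm μ (fun ω => ((X ω, Y ω), W ω)) ((x, y), c) * pm μ W c
        = pm μ (fun ω => (X ω, W ω)) (x, c) * pm μ (fun ω => (Y ω, W ω)) (y, c)) :
    entropy μ (fun ω => ((X ω, Y ω), W ω))
      = entropy μ (fun ω => (X ω, W ω)) + entropy μ (fun ω => (Y ω, W ω)) - entropy μ W := by
  have core := ci_core (pm μ (fun ω => ((X ω, Y ω), W ω))) (pm μ (fun ω => (X ω, W ω)))
      (pm μ (fun ω => (Y ω, W ω))) (pm μ W)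
      (fun p => pm_nonneg μ _ _)
      (fun x c => pm_marg_mid μ X Y W x c)
      (fun y c => pm_marg_mid' μ X Y W y c)
      (fun c => pm_snd μ (fun ω => (X ω, Y ω)) W c)
      hci
  unfold entropy
  linarith [core]

end entropylevel

/-- For M(p) = h(e_p) + g(e_M), if W → (e_p, e_M) → M(p) is a Markov chain and
e_p, e_M are conditionally independent given W, then
I(M(p); W) ≤ I(h(e_p); W) + I(g(e_M); W). -/
theorem stmt_8 {A B C G : Type}
    [Fintype A] [DecidableEq A] [Fintype B] [DecidableEq B]
    [Fintype C] [DecidableEq C] [Fintype G] [DecidableEq G] [Add G]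
    (μ : FinProb Ω) (ep : Ω → A) (eM : Ω → B) (W : Ω → C) (h : A → G) (g : B → G)
    (hMarkov : ∀ (c : C) (pr : A × B) (m : G),
      pm μ (fun ω => (W ω, (ep ω, eM ω), h (ep ω) + g (eM ω))) (c, pr, m) *
          pm μ (fun ω => (ep ω, eM ω)) pr =
        pm μ (fun ω => (W ω, ep ω, eM ω)) (c, pr) *
          pm μ (fun ω => ((ep ω, eM ω), h (ep ω) + g (eM ω))) (pr, m))
    (hCondIndep : ∀ (a : A) (b : B) (c : C),
      pm μ (fun ω => (ep ω, eM ω, W ω)) (a, b, c) * pm μ W c =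
        pm μ (fun ω => (ep ω, W ω)) (a, c) * pm μ (fun ω => (eM ω, W ω)) (b, c)) :
    mutualInfo μ (fun ω => h (ep ω) + g (eM ω)) W ≤
      mutualInfo μ (fun ω => h (ep ω)) W + mutualInfo μ (fun ω => g (eM ω)) W := by
  classical
  -- derived conditional independence for X = h∘ep, Y = g∘eM
  have dci : ∀ (x y : G) (c : C),
      pm μ (fun ω => ((h (ep ω), g (eM ω)), W ω)) ((x, y), c) * pm μ W c
        = pm μ (fun ω => (h (ep ω), W ω)) (x, c) * pm μ (fun ω => (g (eM ω), W ω)) (y, c) := by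
    intro x y c
    rw [pm_pairmap μ h g ep eM W x y c, Finset.sum_mul]
    have e1 : ∀ p : A × B,
        (if h p.1 = x ∧ g p.2 = y then pm μ (fun ω => (ep ω, eM ω, W ω)) (p.1, p.2, c) else 0)
            * pm μ W c
          = if h p.1 = x ∧ g p.2 = y
              then pm μ (fun ω => (ep ω, W ω)) (p.1, c) * pm μ (fun ω => (eM ω, W ω)) (p.2, c)
              else 0 := by
      intro p
      by_cases hh : h p.1 = x ∧ g p.2 = y
      · rw [if_pos hh, if_pos hh]; exact hCondIndep p.1 p.2 c
      · simp [hh]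
    rw [Finset.sum_congr rfl fun p _ => e1 p, pm_comp_fst μ h ep W x c,
      pm_comp_fst μ g eM W y c, Finset.sum_mul_sum]
    rw [Fintype.sum_prod_type]
    refine Finset.sum_congr rfl fun a _ => Finset.sum_congr rfl fun b _ => ?_
    by_cases h1 : h a = x <;> by_cases h2 : g b = y <;> simp [h1, h2]
  have hci_ent : entropy μ (fun ω => ((h (ep ω), g (eM ω)), W ω))
      = entropy μ (fun ω => (h (ep ω), W ω)) + entropy μ (fun ω => (g (eM ω), W ω))
        - entropy μ W :=
    ci_entropy μ (fun ω => h (ep ω)) (fun ω => g (eM ω)) W dci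
  have hdp : entropy μ (fun ω => h (ep ω) + g (eM ω))
        + entropy μ (fun ω => ((h (ep ω), g (eM ω)), W ω))
      ≤ entropy μ (fun ω => (h (ep ω), g (eM ω)))
        + entropy μ (fun ω => (h (ep ω) + g (eM ω), W ω)) :=
    dp_entropy μ (fun ω => (h (ep ω), g (eM ω))) W (fun p => p.1 + p.2)
  have hsub : entropy μ (fun ω => (h (ep ω), g (eM ω)))
      ≤ entropy μ (fun ω => h (ep ω)) + entropy μ (fun ω => g (eM ω)) :=
    entropy_pair_le μ (fun ω => h (ep ω)) (fun ω => g (eM ω))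
  unfold mutualInfo condEntropy
  linarith
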